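/- arXiv:2309.09966 — 4 statements merged into one kernel-verified Lean document; each statement's English description precedes it below -/
import Mathlib

section
/- Let Y = {(x,y) ∈ ℕ² : x ≡ 1 or 7 (mod 8), and y ≡ 3 or 5 (mod 8)} and X = {(t,r) ∈ ℕ² : t ≡ 2 (mod 4) and r is odd}. Then for every (x,y) ∈ Y, exactly one of the two pairs ((x+y)/2, |x−y|/2) and (|x−y|/2, (x+y)/2) belongs to X, and the map f : Y → X sending (x,y) to that unique pair is a bijection. -/
/-- Case (g'): for `Y = {(x,y) : x ≡ ±1 (mod 8), y ≡ ±3 (mod 8)}` and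
`X = {(t,r) : t ≡ 2 (mod 4), r odd}`, exactly one of the pairs
`((x+y)/2, |x−y|/2)` and `(|x−y|/2, (x+y)/2)` lies in `X`, and the map sending
`(x,y)` to that unique pair is a bijection from `Y` onto `X`. -/
theorem stmt_3 :
    (∀ p ∈ {p : ℕ × ℕ | (p.1 ≡ 1 [MOD 8] ∨ p.1 ≡ 7 [MOD 8]) ∧
        (p.2 ≡ 3 [MOD 8] ∨ p.2 ≡ 5 [MOD 8])},
      Xor'
        (((p.1 + p.2) / 2, ((p.1 : ℤ) - (p.2 : ℤ)).natAbs / 2) ∈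
          {q : ℕ × ℕ | q.1 ≡ 2 [MOD 4] ∧ Odd q.2})
        ((((p.1 : ℤ) - (p.2 : ℤ)).natAbs / 2, (p.1 + p.2) / 2) ∈
          {q : ℕ × ℕ | q.1 ≡ 2 [MOD 4] ∧ Odd q.2})) ∧
    ∀ f : ℕ × ℕ → ℕ × ℕ,
      (∀ p ∈ {p : ℕ × ℕ | (p.1 ≡ 1 [MOD 8] ∨ p.1 ≡ 7 [MOD 8]) ∧
          (p.2 ≡ 3 [MOD 8] ∨ p.2 ≡ 5 [MOD 8])},
        f p ∈ {q : ℕ × ℕ | q.1 ≡ 2 [MOD 4] ∧ Odd q.2} ∧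
        (f p = ((p.1 + p.2) / 2, ((p.1 : ℤ) - (p.2 : ℤ)).natAbs / 2) ∨
         f p = (((p.1 : ℤ) - (p.2 : ℤ)).natAbs / 2, (p.1 + p.2) / 2))) →
      Set.BijOn f
        {p : ℕ × ℕ | (p.1 ≡ 1 [MOD 8] ∨ p.1 ≡ 7 [MOD 8]) ∧
          (p.2 ≡ 3 [MOD 8] ∨ p.2 ≡ 5 [MOD 8])}
        {q : ℕ × ℕ | q.1 ≡ 2 [MOD 4] ∧ Odd q.2} := by
  constructor
  · rintro ⟨x, y⟩ ⟨hx, hy⟩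
    simp only [Xor', xor_def, Set.mem_setOf_eq, Nat.ModEq, Nat.odd_iff] at *
    omega
  · intro f hf
    refine ⟨fun p hp => (hf p hp).1, ?_, ?_⟩
    · rintro ⟨x1, y1⟩ h1 ⟨x2, y2⟩ h2 heq
      obtain ⟨hm1, hd1⟩ := hf _ h1
      obtain ⟨hm2, hd2⟩ := hf _ h2
      simp only [Set.mem_setOf_eq, Nat.ModEq, Nat.odd_iff] at h1 h2 hm1 hm2
      rcases hd1 with h1' | h1' <;> rcases hd2 with h2' | h2' <;>
        rw [h1'] at hm1 heq <;> rw [h2'] at hm2 heq <;>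
        simp only [Prod.mk.injEq] at heq ⊢ <;> omega
    · rintro ⟨t, r⟩ ⟨ht, hr⟩
      simp only [Nat.ModEq, Nat.odd_iff] at ht hr
      rcases le_or_gt r t with hrt | hrt <;>
        by_cases h8 : (t + r) % 8 = 1 ∨ (t + r) % 8 = 7
      · have hmem : (t + r, t - r) ∈ {p : ℕ × ℕ | (p.1 ≡ 1 [MOD 8] ∨ p.1 ≡ 7 [MOD 8]) ∧
            (p.2 ≡ 3 [MOD 8] ∨ p.2 ≡ 5 [MOD 8])} := (by simp only [Set.mem_setOf_eq, Nat.ModEq]; omega)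
        refine ⟨_, hmem, ?_⟩
        obtain ⟨hm, hd⟩ := hf _ hmem
        simp only [Set.mem_setOf_eq, Nat.ModEq, Nat.odd_iff] at hm
        rcases hd with h | h <;> rw [h] at hm ⊢ <;> simp only [Prod.mk.injEq] <;> omega
      · have hmem : (t - r, t + r) ∈ {p : ℕ × ℕ | (p.1 ≡ 1 [MOD 8] ∨ p.1 ≡ 7 [MOD 8]) ∧
            (p.2 ≡ 3 [MOD 8] ∨ p.2 ≡ 5 [MOD 8])} := (by simp only [Set.mem_setOf_eq, Nat.ModEq]; omega)
        refine ⟨_, hmem, ?_⟩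
        obtain ⟨hm, hd⟩ := hf _ hmem
        simp only [Set.mem_setOf_eq, Nat.ModEq, Nat.odd_iff] at hm
        rcases hd with h | h <;> rw [h] at hm ⊢ <;> simp only [Prod.mk.injEq] <;> omega
      · have hmem : (t + r, r - t) ∈ {p : ℕ × ℕ | (p.1 ≡ 1 [MOD 8] ∨ p.1 ≡ 7 [MOD 8]) ∧
            (p.2 ≡ 3 [MOD 8] ∨ p.2 ≡ 5 [MOD 8])} := (by simp only [Set.mem_setOf_eq, Nat.ModEq]; omega)
        refine ⟨_, hmem, ?_⟩
        obtain ⟨hm, hd⟩ := hf _ hmem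
        simp only [Set.mem_setOf_eq, Nat.ModEq, Nat.odd_iff] at hm
        rcases hd with h | h <;> rw [h] at hm ⊢ <;> simp only [Prod.mk.injEq] <;> omega
      · have hmem : (r - t, t + r) ∈ {p : ℕ × ℕ | (p.1 ≡ 1 [MOD 8] ∨ p.1 ≡ 7 [MOD 8]) ∧
            (p.2 ≡ 3 [MOD 8] ∨ p.2 ≡ 5 [MOD 8])} := (by simp only [Set.mem_setOf_eq, Nat.ModEq]; omega)
        refine ⟨_, hmem, ?_⟩
        obtain ⟨hm, hd⟩ := hf _ hmem
        simp only [Set.mem_setOf_eq, Nat.ModEq, Nat.odd_iff] at hm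
        rcases hd with h | h <;> rw [h] at hm ⊢ <;> simp only [Prod.mk.injEq] <;> omega
end

section
/- Let Y = {(x,y) ∈ ℕ² : x is odd, y is odd, x ≥ y, and (8 ∣ x+y or 8 ∣ x−y)} and X = {(t,r) ∈ ℕ² : 4 ∣ t and r is odd}. Then for every (x,y) ∈ Y, exactly one of the two pairs ((x+y)/2, (x−y)/2) and ((x−y)/2, (x+y)/2) belongs to X, and the map f : Y → X sending (x,y) to that unique pair is a bijection. -/
/-- Case (h): for `Y = {(x,y) : x, y odd, x ≥ y, 8 ∣ x+y or 8 ∣ x−y}` and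
`X = {(t,r) : 4 ∣ t, r odd}`, exactly one of the pairs `((x+y)/2, (x−y)/2)` and
`((x−y)/2, (x+y)/2)` lies in `X`, and the map sending `(x,y)` to that unique
pair is a bijection from `Y` onto `X`. -/
theorem stmt_4 :
    (∀ p ∈ {p : ℕ × ℕ | Odd p.1 ∧ Odd p.2 ∧ p.1 ≥ p.2 ∧
        (8 ∣ p.1 + p.2 ∨ 8 ∣ p.1 - p.2)},
      Xor'
        (((p.1 + p.2) / 2, (p.1 - p.2) / 2) ∈ {q : ℕ × ℕ | 4 ∣ q.1 ∧ Odd q.2})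
        (((p.1 - p.2) / 2, (p.1 + p.2) / 2) ∈ {q : ℕ × ℕ | 4 ∣ q.1 ∧ Odd q.2})) ∧
    ∀ f : ℕ × ℕ → ℕ × ℕ,
      (∀ p ∈ {p : ℕ × ℕ | Odd p.1 ∧ Odd p.2 ∧ p.1 ≥ p.2 ∧
          (8 ∣ p.1 + p.2 ∨ 8 ∣ p.1 - p.2)},
        f p ∈ {q : ℕ × ℕ | 4 ∣ q.1 ∧ Odd q.2} ∧
        (f p = ((p.1 + p.2) / 2, (p.1 - p.2) / 2) ∨
         f p = ((p.1 - p.2) / 2, (p.1 + p.2) / 2))) →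
      Set.BijOn f
        {p : ℕ × ℕ | Odd p.1 ∧ Odd p.2 ∧ p.1 ≥ p.2 ∧
          (8 ∣ p.1 + p.2 ∨ 8 ∣ p.1 - p.2)}
        {q : ℕ × ℕ | 4 ∣ q.1 ∧ Odd q.2} := by
  constructor
  · rintro ⟨x, y⟩ hp
    simp only [Set.mem_setOf_eq, Nat.odd_iff, Xor', Xor] at hp ⊢
    omega
  · intro f hf
    refine ⟨fun p hp => (hf p hp).1, ?_, ?_⟩
    · rintro ⟨x, y⟩ hp ⟨x', y'⟩ hp' heq
      obtain ⟨hX, hc⟩ := hf _ hp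
      obtain ⟨hX', hc'⟩ := hf _ hp'
      simp only [Set.mem_setOf_eq, Nat.odd_iff] at hp hp' hX hX'
      have hkey : f (x, y) = f (x', y') := heq
      rcases hc with h1 | h1 <;> rcases hc' with h2 | h2 <;>
        rw [h1, h2, Prod.mk.injEq] at hkey <;>
        simp only [Prod.mk.injEq] <;> omega
    · rintro ⟨t, r⟩ hq
      simp only [Set.mem_setOf_eq, Nat.odd_iff] at hq
      have hmem : (t + r, t - r + (r - t)) ∈
          {p : ℕ × ℕ | Odd p.1 ∧ Odd p.2 ∧ p.1 ≥ p.2 ∧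
            (8 ∣ p.1 + p.2 ∨ 8 ∣ p.1 - p.2)} := by
        simp only [Set.mem_setOf_eq, Nat.odd_iff]
        omega
      refine ⟨_, hmem, ?_⟩
      obtain ⟨hX, hc⟩ := hf _ hmem
      rcases hc with h1 | h1 <;>
        rw [h1] at hX ⊢ <;>
        simp only [Set.mem_setOf_eq, Nat.odd_iff] at hX <;>
        simp only [Prod.mk.injEq] <;> omega
end

section
/- Let Y = {(x,y) ∈ ℕ² : x is odd, y is odd, x ≥ y, and (x+y ≡ 4 (mod 8) or x−y ≡ 4 (mod 8))} and X = {(t,r) ∈ ℕ² : t ≡ 2 (mod 4) and r is odd}. Then for every (x,y) ∈ Y, exactly one of the two pairs ((x+y)/2, (x−y)/2) and ((x−y)/2, (x+y)/2) belongs to X, and the map f : Y → X sending (x,y) to that unique pair is a bijection. -/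
/-- Case (h'): for `Y = {(x,y) : x, y odd, x ≥ y, x+y ≡ 4 or x−y ≡ 4 (mod 8)}`
and `X = {(t,r) : t ≡ 2 (mod 4), r odd}`, exactly one of the pairs
`((x+y)/2, (x−y)/2)` and `((x−y)/2, (x+y)/2)` lies in `X`, and the map sending
`(x,y)` to that unique pair is a bijection from `Y` onto `X`. -/
theorem stmt_5 :
    (∀ p ∈ {p : ℕ × ℕ | Odd p.1 ∧ Odd p.2 ∧ p.1 ≥ p.2 ∧
        (p.1 + p.2 ≡ 4 [MOD 8] ∨ p.1 - p.2 ≡ 4 [MOD 8])},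
      Xor'
        (((p.1 + p.2) / 2, (p.1 - p.2) / 2) ∈
          {q : ℕ × ℕ | q.1 ≡ 2 [MOD 4] ∧ Odd q.2})
        (((p.1 - p.2) / 2, (p.1 + p.2) / 2) ∈
          {q : ℕ × ℕ | q.1 ≡ 2 [MOD 4] ∧ Odd q.2})) ∧
    ∀ f : ℕ × ℕ → ℕ × ℕ,
      (∀ p ∈ {p : ℕ × ℕ | Odd p.1 ∧ Odd p.2 ∧ p.1 ≥ p.2 ∧
          (p.1 + p.2 ≡ 4 [MOD 8] ∨ p.1 - p.2 ≡ 4 [MOD 8])},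
        f p ∈ {q : ℕ × ℕ | q.1 ≡ 2 [MOD 4] ∧ Odd q.2} ∧
        (f p = ((p.1 + p.2) / 2, (p.1 - p.2) / 2) ∨
         f p = ((p.1 - p.2) / 2, (p.1 + p.2) / 2))) →
      Set.BijOn f
        {p : ℕ × ℕ | Odd p.1 ∧ Odd p.2 ∧ p.1 ≥ p.2 ∧
          (p.1 + p.2 ≡ 4 [MOD 8] ∨ p.1 - p.2 ≡ 4 [MOD 8])}
        {q : ℕ × ℕ | q.1 ≡ 2 [MOD 4] ∧ Odd q.2} := by
  constructor
  · rintro ⟨x, y⟩ hp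
    simp only [Set.mem_setOf_eq, Nat.ModEq, Nat.odd_iff, Xor', Xor] at hp ⊢
    omega
  · intro f hf
    have hkey : ∀ p ∈ {p : ℕ × ℕ | Odd p.1 ∧ Odd p.2 ∧ p.1 ≥ p.2 ∧
          (p.1 + p.2 ≡ 4 [MOD 8] ∨ p.1 - p.2 ≡ 4 [MOD 8])},
        p.1 = (f p).1 + (f p).2 ∧
        p.2 = ((f p).1 - (f p).2) + ((f p).2 - (f p).1) := by
      intro p hp
      obtain ⟨-, hc⟩ := hf p hp
      simp only [Set.mem_setOf_eq, Nat.ModEq, Nat.odd_iff] at hp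
      rcases hc with h | h <;> rw [h] <;> simp only [] <;> omega
    refine ⟨fun p hp => (hf p hp).1, ?_, ?_⟩
    · intro p hp q hq heq
      obtain ⟨h1, h2⟩ := hkey p hp
      obtain ⟨h3, h4⟩ := hkey q hq
      rw [heq] at h1 h2
      exact Prod.ext (h1.trans h3.symm) (h2.trans h4.symm)
    · rintro ⟨t, r⟩ hq
      simp only [Set.mem_setOf_eq, Nat.ModEq, Nat.odd_iff] at hq
      refine ⟨(t + r, (t - r) + (r - t)), ?_, ?_⟩
      · simp only [Set.mem_setOf_eq, Nat.ModEq, Nat.odd_iff]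
        omega
      · have hp : (t + r, (t - r) + (r - t)) ∈ {p : ℕ × ℕ | Odd p.1 ∧ Odd p.2 ∧ p.1 ≥ p.2 ∧
            (p.1 + p.2 ≡ 4 [MOD 8] ∨ p.1 - p.2 ≡ 4 [MOD 8])} := by
          simp only [Set.mem_setOf_eq, Nat.ModEq, Nat.odd_iff]
          omega
        obtain ⟨hm, hc⟩ := hf _ hp
        simp only [Set.mem_setOf_eq, Nat.ModEq, Nat.odd_iff] at hm
        rcases hc with h | h <;> rw [h] at hm ⊢ <;>
          simp only [Prod.mk.injEq] at hm ⊢ <;> omega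
end

section
/- Let Y = {(x,y) ∈ ℕ² : x ≡ 1 or 7 (mod 8), y ≡ 1 or 7 (mod 8), and x ≥ y} and X = {(t,r) ∈ ℕ² : 4 ∣ t, r is odd, and t+r ≡ 1 or 7 (mod 8)}. Then for every (x,y) ∈ Y, exactly one of the two pairs ((x+y)/2, (x−y)/2) and ((x−y)/2, (x+y)/2) belongs to X, and the map f : Y → X sending (x,y) to that unique pair is a bijection. -/
/-- Case (i''): for `Y = {(x,y) : x ≡ ±1, y ≡ ±1 (mod 8), x ≥ y}` and
`X = {(t,r) : 4 ∣ t, r odd, t+r ≡ ±1 (mod 8)}`, exactly one of the pairs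
`((x+y)/2, (x−y)/2)` and `((x−y)/2, (x+y)/2)` lies in `X`, and the map sending
`(x,y)` to that unique pair is a bijection from `Y` onto `X`. -/
theorem stmt_6 :
    (∀ p ∈ {p : ℕ × ℕ | (p.1 ≡ 1 [MOD 8] ∨ p.1 ≡ 7 [MOD 8]) ∧
        (p.2 ≡ 1 [MOD 8] ∨ p.2 ≡ 7 [MOD 8]) ∧ p.1 ≥ p.2},
      Xor'
        (((p.1 + p.2) / 2, (p.1 - p.2) / 2) ∈
          {q : ℕ × ℕ | 4 ∣ q.1 ∧ Odd q.2 ∧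
            (q.1 + q.2 ≡ 1 [MOD 8] ∨ q.1 + q.2 ≡ 7 [MOD 8])})
        (((p.1 - p.2) / 2, (p.1 + p.2) / 2) ∈
          {q : ℕ × ℕ | 4 ∣ q.1 ∧ Odd q.2 ∧
            (q.1 + q.2 ≡ 1 [MOD 8] ∨ q.1 + q.2 ≡ 7 [MOD 8])})) ∧
    ∀ f : ℕ × ℕ → ℕ × ℕ,
      (∀ p ∈ {p : ℕ × ℕ | (p.1 ≡ 1 [MOD 8] ∨ p.1 ≡ 7 [MOD 8]) ∧
          (p.2 ≡ 1 [MOD 8] ∨ p.2 ≡ 7 [MOD 8]) ∧ p.1 ≥ p.2},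
        f p ∈ {q : ℕ × ℕ | 4 ∣ q.1 ∧ Odd q.2 ∧
          (q.1 + q.2 ≡ 1 [MOD 8] ∨ q.1 + q.2 ≡ 7 [MOD 8])} ∧
        (f p = ((p.1 + p.2) / 2, (p.1 - p.2) / 2) ∨
         f p = ((p.1 - p.2) / 2, (p.1 + p.2) / 2))) →
      Set.BijOn f
        {p : ℕ × ℕ | (p.1 ≡ 1 [MOD 8] ∨ p.1 ≡ 7 [MOD 8]) ∧
          (p.2 ≡ 1 [MOD 8] ∨ p.2 ≡ 7 [MOD 8]) ∧ p.1 ≥ p.2}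
        {q : ℕ × ℕ | 4 ∣ q.1 ∧ Odd q.2 ∧
          (q.1 + q.2 ≡ 1 [MOD 8] ∨ q.1 + q.2 ≡ 7 [MOD 8])} := by
  constructor
  · rintro ⟨x, y⟩ ⟨hx, hy, hxy⟩
    simp only [Set.mem_setOf_eq, Nat.ModEq, Nat.odd_iff, Xor', Xor] at *
    omega
  · intro f hf
    refine ⟨fun p hp => (hf p hp).1, ?_, ?_⟩
    · rintro ⟨x, y⟩ hp ⟨x', y'⟩ hq heq
      obtain ⟨hmem, hcase⟩ := hf _ hp
      obtain ⟨hmem', hcase'⟩ := hf _ hq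
      rw [heq] at hcase hmem
      rcases hab : f (x', y') with ⟨a, b⟩
      rw [hab] at hcase hcase' hmem
      simp only [Set.mem_setOf_eq, Nat.ModEq, Nat.odd_iff, Prod.mk.injEq] at *
      omega
    · rintro ⟨t, r⟩ htr
      have hY : ((t + r, (t - r) + (r - t)) : ℕ × ℕ) ∈
          {p : ℕ × ℕ | (p.1 ≡ 1 [MOD 8] ∨ p.1 ≡ 7 [MOD 8]) ∧
            (p.2 ≡ 1 [MOD 8] ∨ p.2 ≡ 7 [MOD 8]) ∧ p.1 ≥ p.2} := by
        simp only [Set.mem_setOf_eq, Nat.ModEq, Nat.odd_iff] at *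
        omega
      refine ⟨(t + r, (t - r) + (r - t)), hY, ?_⟩
      obtain ⟨hmem, hcase⟩ := hf _ hY
      rcases hab : f (t + r, (t - r) + (r - t)) with ⟨a, b⟩
      rw [hab] at hcase hmem
      simp only [Set.mem_setOf_eq, Nat.ModEq, Nat.odd_iff, Prod.mk.injEq] at *
      omega
end
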